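/- arXiv:2604.17548 — 3 statements merged into one kernel-verified Lean document; each statement's English description precedes it below -/
import Mathlib

section
/- Let G be a finite simple graph and let T be a spanning forest of G, i.e., a subgraph of G with the same vertex set whose underlying graph is acyclic and such that any two vertices are connected in T if and only if they are connected in G. Then the ZMod 2-linear map ker ∂_G → ((E(G) \ E(T)) → ZMod 2) that restricts a cycle vector to the edges of G not in T is a linear isomorphism. In particular, for each non-forest edge e there is a unique cycle vector equal to 1 at e and 0 at every other non-forest edge, and these fundamental cycles form a basis of the cycle space of G. -/
open Classical in
/-- The boundary map `∂_G` of a finite simple graph `G`: the `ZMod 2`-linear map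
`(E(G) → ZMod 2) → (V → ZMod 2)` sending the indicator function of an edge with
endpoints `u`, `v` to `χ_u + χ_v`.  (Equivalently, `∂_G γ v` is the sum of `γ e`
over all edges `e` of `G` containing the vertex `v`.)  The cycle space of `G`
is `ker ∂_G`. -/
noncomputable def gbdry {V : Type*} [Fintype V] (G : SimpleGraph V) :
    (G.edgeSet → ZMod 2) →ₗ[ZMod 2] (V → ZMod 2) where
  toFun γ v := ∑ e : G.edgeSet, if v ∈ (e : Sym2 V) then γ e else 0
  map_add' γ δ := by
    funext v
    try dsimp only
    simp only [Pi.add_apply]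
    rw [← Finset.sum_add_distrib]
    refine Finset.sum_congr rfl fun e _ => ?_
    by_cases h : v ∈ (e : Sym2 V) <;> simp [h]
  map_smul' c γ := by
    funext v
    try dsimp only
    simp only [Pi.smul_apply, smul_eq_mul, RingHom.id_apply]
    rw [Finset.mul_sum]
    refine Finset.sum_congr rfl fun e _ => ?_
    by_cases h : v ∈ (e : Sym2 V) <;> simp [h]

open Classical in
/-- The `ZMod 2`-linear map restricting a cycle vector of `G` to the edges of `G`
not in the subgraph `T`. -/
noncomputable def restrictCycles {V : Type*} [Fintype V] (G : SimpleGraph V)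
    (T : G.Subgraph) :
    LinearMap.ker (gbdry G) →ₗ[ZMod 2] ((↥(G.edgeSet \ T.edgeSet)) → ZMod 2) where
  toFun γ e := (γ : G.edgeSet → ZMod 2) ⟨(e : Sym2 V), e.2.1⟩
  map_add' _ _ := rfl
  map_smul' _ _ := rfl

/-!
A cycle vector `γ` supported on the forest vanishes: every forest edge `s(a, b)` is a bridge of
the forest, and summing `∂γ = 0` over the vertices reachable from `a` in the forest minus that
edge counts `s(a, b)` once and every other edge of the support zero or two times.
Conversely, a non-forest edge `s(u, v)` closed up by a forest walk from `v` to `u` is a closed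
walk, so its edge multiplicities mod 2 form a cycle vector; off the forest it is the indicator of
`s(u, v)`.
-/

section CycleSpace

open Classical SimpleGraph

variable {V : Type*} {G : SimpleGraph V}

theorem gbdry_apply [Fintype V] (γ : G.edgeSet → ZMod 2) (v : V) :
    gbdry G γ v = ∑ e : G.edgeSet, if v ∈ (e : Sym2 V) then γ e else 0 := rfl

theorem gbdry_single_edge [Fintype V] {u v : V} (h : G.Adj u v) :
    gbdry G (Pi.single ⟨s(u, v), G.mem_edgeSet.2 h⟩ 1) = Pi.single u 1 + Pi.single v 1 := by
  funext w
  rw [gbdry_apply, Finset.sum_eq_single ⟨s(u, v), G.mem_edgeSet.2 h⟩ (fun e _ he => by simp [he])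
    (by simp)]
  by_cases hu : w = u
  · subst hu; simp [h.ne]
  · by_cases hv : w = v
    · subst hv; simp [hu]
    · simp [hu, hv]

noncomputable def walkVector {u v : V} (p : G.Walk u v) : G.edgeSet → ZMod 2 :=
  fun e => (p.edges.count (e : Sym2 V) : ZMod 2)

theorem walkVector_nil {u : V} : walkVector (.nil : G.Walk u u) = 0 := by
  funext e; simp [walkVector]

theorem walkVector_cons {u v w : V} (h : G.Adj u v) (p : G.Walk v w) :
    walkVector (.cons h p) = Pi.single ⟨s(u, v), G.mem_edgeSet.2 h⟩ 1 + walkVector p := by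
  funext e
  by_cases he : e = ⟨s(u, v), G.mem_edgeSet.2 h⟩
  · subst he; simp [walkVector, add_comm]
  · have : s(u, v) ≠ e := fun h' => he (Subtype.ext h'.symm)
    simp [walkVector, he, this]

theorem gbdry_walkVector [Fintype V] {u v : V} (p : G.Walk u v) :
    gbdry G (walkVector p) = Pi.single u 1 + Pi.single v 1 := by
  induction p with
  | nil => rw [walkVector_nil, map_zero, ZModModule.add_self]
  | cons h p ih =>
    rw [walkVector_cons, map_add, gbdry_single_edge h, ih, ZModModule.add_add_add_cancel]

theorem walkVector_mem_ker [Fintype V] {v : V} (p : G.Walk v v) :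
    walkVector p ∈ LinearMap.ker (gbdry G) := by
  rw [LinearMap.mem_ker, gbdry_walkVector, ZModModule.add_self]

theorem sum_ite_mem_sym2 {M : Type*} [AddCommMonoid M] {x y : V} (hxy : x ≠ y) (s : Finset V)
    (c : M) :
    ∑ v ∈ s, (if v ∈ s(x, y) then c else 0) =
      (if x ∈ s then c else 0) + (if y ∈ s then c else 0) := by
  have h : ∀ v, (if v ∈ s(x, y) then c else 0) =
      (Pi.single x c : V → M) v + (Pi.single y c : V → M) v := by
    intro v
    by_cases hx : v = x
    · subst hx; simp [hxy]
    · by_cases hy : v = y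
      · subst hy; simp [hx]
      · simp [hx, hy]
  simp_rw [h, Finset.sum_add_distrib, Finset.sum_pi_single']

theorem sum_gbdry_eq_sum_sum [Fintype V] (γ : G.edgeSet → ZMod 2) (s : Finset V) :
    ∑ v ∈ s, gbdry G γ v = ∑ e : G.edgeSet, ∑ v ∈ s, if v ∈ (e : Sym2 V) then γ e else 0 := by
  simp_rw [gbdry_apply]
  exact Finset.sum_comm

theorem apply_eq_zero_of_unique_crossing [Fintype V] {γ : G.edgeSet → ZMod 2}
    (hγ : γ ∈ LinearMap.ker (gbdry G)) (s : Finset V) {a b : V} (hab : G.Adj a b)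
    (ha : a ∈ s) (hb : b ∉ s)
    (hs : ∀ x y (hxy : G.Adj x y), s(x, y) ≠ s(a, b) → γ ⟨s(x, y), hxy⟩ ≠ 0 → (x ∈ s ↔ y ∈ s)) :
    γ ⟨s(a, b), hab⟩ = 0 := by
  have hsum : ∑ v ∈ s, gbdry G γ v = 0 := by simp [LinearMap.mem_ker.mp hγ]
  rw [sum_gbdry_eq_sum_sum, Finset.sum_eq_single ⟨s(a, b), hab⟩ ?_ (by simp)] at hsum
  · rwa [sum_ite_mem_sym2 hab.ne, if_pos ha, if_neg hb, add_zero] at hsum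
  rintro ⟨⟨x, y⟩, hxy⟩ - hne
  by_cases hγxy : γ ⟨s(x, y), hxy⟩ = 0
  · simp [hγxy]
  have hiff := hs x y hxy (fun h => hne (Subtype.ext h)) hγxy
  rw [sum_ite_mem_sym2 (G.ne_of_adj hxy)]
  by_cases hx : x ∈ s
  · simp [hx, hiff.mp hx, ZModModule.add_self]
  · simp [hx, mt hiff.mpr hx]

theorem apply_eq_zero_of_isBridge [Fintype V] {H : SimpleGraph V} {γ : G.edgeSet → ZMod 2}
    (hγ : γ ∈ LinearMap.ker (gbdry G))
    (hsupp : ∀ x y (hxy : G.Adj x y), γ ⟨s(x, y), hxy⟩ ≠ 0 → H.Adj x y)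
    {a b : V} (hab : G.Adj a b) (hbr : H.IsBridge s(a, b)) :
    γ ⟨s(a, b), hab⟩ = 0 := by
  set H' := H.deleteEdges {s(a, b)}
  refine apply_eq_zero_of_unique_crossing hγ {v | H'.Reachable a v} hab (by simp)
    (by simpa using isBridge_iff.mp hbr) fun x y hxy hne hγxy => ?_
  have hadj : H'.Adj x y := by simp [H', hsupp x y hxy hγxy, hne]
  simpa using ⟨fun h => h.trans hadj.reachable, fun h => h.trans hadj.symm.reachable⟩

theorem eq_zero_of_isAcyclic [Fintype V] {H : SimpleGraph V} (hH : H.IsAcyclic)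
    {γ : G.edgeSet → ZMod 2} (hγ : γ ∈ LinearMap.ker (gbdry G))
    (hsupp : ∀ x y (hxy : G.Adj x y), γ ⟨s(x, y), hxy⟩ ≠ 0 → H.Adj x y) :
    γ = 0 := by
  funext ⟨e, he⟩
  induction e using Sym2.ind with | h a b => ?_
  by_contra hne
  exact hne (apply_eq_zero_of_isBridge hγ hsupp he
    (isAcyclic_iff_forall_adj_isBridge.mp hH (hsupp a b he hne)))

variable [Fintype V] {T : G.Subgraph}

theorem restrictCycles_apply (γ : LinearMap.ker (gbdry G)) (e : ↥(G.edgeSet \ T.edgeSet)) :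
    restrictCycles G T γ e = (γ : G.edgeSet → ZMod 2) ⟨e, Set.sdiff_subset e.2⟩ := rfl

theorem restrictCycles_injective (hT : T.spanningCoe.IsAcyclic) :
    Function.Injective (restrictCycles G T) := by
  rw [injective_iff_map_eq_zero]
  rintro ⟨γ, hγ⟩ hres
  refine Subtype.ext (eq_zero_of_isAcyclic hT hγ fun x y hxy hne => ?_)
  by_contra hxyT
  exact hne (congrFun hres ⟨s(x, y), hxy, hxyT⟩)

theorem single_mem_range_restrictCycles (hT : ∀ u v, G.Adj u v → T.spanningCoe.Reachable u v)
    (ε : ↥(G.edgeSet \ T.edgeSet)) :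
    Pi.single ε 1 ∈ LinearMap.range (restrictCycles G T) := by
  obtain ⟨e, huv, huvT⟩ := ε
  induction e using Sym2.ind with | h u v => ?_
  obtain ⟨p⟩ := hT u v (G.mem_edgeSet.1 huv)
  let q : G.Walk v u := p.reverse.mapLe T.spanningCoe_le
  refine ⟨⟨walkVector (.cons (G.mem_edgeSet.1 huv) q), walkVector_mem_ker _⟩, funext fun e => ?_⟩
  have he_q : (e : Sym2 V) ∉ q.edges := fun h => e.2.2 (by
    simpa using p.reverse.edges_subset_edgeSet (by simpa [q, Walk.edges_mapLe_eq_edges] using h))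
  rw [restrictCycles_apply, Subtype.coe_mk, walkVector_cons]
  simp [walkVector, List.count_eq_zero_of_not_mem he_q, Pi.single_apply, Subtype.ext_iff]

theorem restrictCycles_surjective (hT : ∀ u v, G.Adj u v → T.spanningCoe.Reachable u v) :
    Function.Surjective (restrictCycles G T) := by
  rw [← LinearMap.range_eq_top, eq_top_iff, ← (Pi.basisFun (ZMod 2) _).span_eq, Submodule.span_le]
  rintro _ ⟨ε, rfl⟩
  simpa using single_mem_range_restrictCycles hT ε

end CycleSpace

theorem stmt7_general {V : Type*} [Fintype V] (G : SimpleGraph V) (T : G.Subgraph)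
    (hacyclic : T.spanningCoe.IsAcyclic)
    (hreach : ∀ u v : V, T.spanningCoe.Reachable u v ↔ G.Reachable u v) :
    Function.Bijective (restrictCycles G T) :=
  ⟨restrictCycles_injective hacyclic,
    restrictCycles_surjective fun u v huv => (hreach u v).mpr huv.reachable⟩

/-- Let `T` be a spanning forest of a finite simple graph `G`: a subgraph
with the same vertex set, acyclic, and such that any two vertices are connected in `T`
iff they are connected in `G`.  Then the `ZMod 2`-linear map `ker ∂_G → ((E(G) \ E(T)) → ZMod 2)`
restricting a cycle vector to the non-forest edges is a linear isomorphism (in particular,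
for each non-forest edge there is a unique fundamental cycle, and these form a basis
of the cycle space). -/
theorem stmt7 {V : Type*} [Fintype V] (G : SimpleGraph V) (T : G.Subgraph)
    (hverts : T.verts = Set.univ)
    (hacyclic : T.spanningCoe.IsAcyclic)
    (hreach : ∀ u v : V, T.spanningCoe.Reachable u v ↔ G.Reachable u v) :
    Function.Bijective (restrictCycles G T) :=
  stmt7_general G T hacyclic hreach
end

section
/- Let S be a nonempty finite type and let h, h' : S → ℝ. Then there exist m ≥ 1 and real numbers 0 = t₀ < t₁ < ... < t_m = 1 such that for every i < m and all x, y ∈ S, either (1−t)·h(x) + t·h'(x) ≤ (1−t)·h(y) + t·h'(y) for all t ∈ [tᵢ, tᵢ₊₁], or (1−t)·h(x) + t·h'(x) ≥ (1−t)·h(y) + t·h'(y) for all t ∈ [tᵢ, tᵢ₊₁]. That is, the unit interval can be partitioned into finitely many closed subintervals on each of which the relative ordering of the linear interpolations h_t = (1−t)h + t·h' is constant. -/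
/-- If an affine function `s ↦ c + s*d` is negative at `a` and positive at `b > a`,
then its root `-c/d` lies strictly between `a` and `b`. -/
lemma root_between {c d a b : ℝ} (hab : a < b) (h1 : c + a * d < 0) (h2 : 0 < c + b * d) :
    a < -c / d ∧ -c / d < b := by
  have hd : 0 < d := by nlinarith
  constructor
  · rw [lt_div_iff₀ hd]; linarith
  · rw [div_lt_iff₀ hd]; linarith

/-- For functions `h, h' : S → ℝ` on a nonempty finite type `S`,
the unit interval can be partitioned into finitely many closed subintervals
`[t₀, t₁], ..., [t_{m-1}, t_m]` with `0 = t₀ < t₁ < ... < t_m = 1`, on each of which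
the relative ordering of the linear interpolations `h_t = (1−t)·h + t·h'` is constant. -/
theorem stmt12 {S : Type*} [Finite S] [Nonempty S] (h h' : S → ℝ) :
    ∃ (m : ℕ) (t : ℕ → ℝ), 1 ≤ m ∧ t 0 = 0 ∧ t m = 1 ∧ (∀ i < m, t i < t (i + 1)) ∧
      ∀ i < m, ∀ x y : S,
        (∀ s ∈ Set.Icc (t i) (t (i + 1)),
            (1 - s) * h x + s * h' x ≤ (1 - s) * h y + s * h' y) ∨
        (∀ s ∈ Set.Icc (t i) (t (i + 1)),
            (1 - s) * h y + s * h' y ≤ (1 - s) * h x + s * h' x) := by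
  classical
  have _i : Fintype S := Fintype.ofFinite S
  set c : S → S → ℝ := fun x y => h x - h y with hc
  set d : S → S → ℝ := fun x y => (h' x - h' y) - (h x - h y) with hd
  set r : S × S → ℝ := fun p => -(c p.1 p.2) / d p.1 p.2 with hr
  set T : Finset ℝ :=
    (insert (0:ℝ) (insert 1 (Finset.image r Finset.univ))).filter
      (fun s => 0 ≤ s ∧ s ≤ 1) with hT
  have h0T : (0:ℝ) ∈ T := by
    simp [hT]
  have h1T : (1:ℝ) ∈ T := by
    simp [hT]
  have hTsub : ∀ s ∈ T, 0 ≤ s ∧ s ≤ 1 := fun s hs => (Finset.mem_filter.mp hs).2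
  have hcard : 2 ≤ T.card :=
    Finset.one_lt_card.mpr ⟨0, h0T, 1, h1T, by norm_num⟩
  set n := T.card with hn
  set e : Fin n ≃o {x // x ∈ T} := T.orderIsoOfFin rfl with he
  refine ⟨n - 1, fun i => if hi : i < n then (e ⟨i, hi⟩ : ℝ) else 1, by omega, ?_, ?_, ?_, ?_⟩
  · -- t 0 = 0
    have h0 : 0 < n := by omega
    simp only [dif_pos h0]
    have hmem := (e ⟨0, h0⟩).2
    have hle : (e ⟨0, h0⟩ : ℝ) ≤ (e (e.symm ⟨0, h0T⟩) : ℝ) := by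
      have : (⟨0, h0⟩ : Fin n) ≤ e.symm ⟨0, h0T⟩ := by simp [Fin.le_def]
      exact_mod_cast e.monotone this
    rw [e.apply_symm_apply] at hle
    exact le_antisymm hle ((hTsub _ hmem).1)
  · -- t (n-1) = 1
    have hlast : n - 1 < n := by omega
    simp only [dif_pos hlast]
    have hmem := (e ⟨n - 1, hlast⟩).2
    have hle : (e (e.symm ⟨1, h1T⟩) : ℝ) ≤ (e ⟨n - 1, hlast⟩ : ℝ) := by
      have : e.symm ⟨1, h1T⟩ ≤ (⟨n - 1, hlast⟩ : Fin n) := by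
        rcases e.symm ⟨1, h1T⟩ with ⟨j, hj⟩
        exact Fin.mk_le_mk.mpr (by omega)
      exact_mod_cast e.monotone this
    rw [e.apply_symm_apply] at hle
    exact le_antisymm ((hTsub _ hmem).2) hle
  · -- strict mono
    intro i hi
    have h1 : i < n := by omega
    have h2 : i + 1 < n := by omega
    simp only [dif_pos h1, dif_pos h2]
    have : (⟨i, h1⟩ : Fin n) < ⟨i + 1, h2⟩ := Fin.mk_lt_mk.mpr (by omega)
    exact_mod_cast e.strictMono this
  · -- main property
    intro i hi x y
    have h1 : i < n := by omega
    have h2 : i + 1 < n := by omega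
    simp only [dif_pos h1, dif_pos h2]
    set a : ℝ := (e ⟨i, h1⟩ : ℝ) with ha
    set b : ℝ := (e ⟨i + 1, h2⟩ : ℝ) with hb
    have hab : a < b := by
      exact_mod_cast e.strictMono (Fin.mk_lt_mk.mpr (by omega) : (⟨i, h1⟩ : Fin n) < ⟨i + 1, h2⟩)
    have haI := hTsub _ (e ⟨i, h1⟩).2
    have hbI := hTsub _ (e ⟨i + 1, h2⟩).2
    -- no element of T strictly between a and b
    have hbetween : ∀ s ∈ T, ¬(a < s ∧ s < b) := by
      intro s hs ⟨hs1, hs2⟩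
      have heq : (e (e.symm ⟨s, hs⟩) : ℝ) = s := by rw [e.apply_symm_apply]
      have hj1 : (⟨i, h1⟩ : Fin n) < e.symm ⟨s, hs⟩ := by
        refine e.lt_iff_lt.mp ?_
        rw [e.apply_symm_apply]
        exact Subtype.coe_lt_coe.mp hs1
      have hj2 : e.symm ⟨s, hs⟩ < (⟨i + 1, h2⟩ : Fin n) := by
        refine e.lt_iff_lt.mp ?_
        rw [e.apply_symm_apply]
        exact Subtype.coe_lt_coe.mp hs2
      rcases e.symm ⟨s, hs⟩ with ⟨j, hj⟩
      rw [Fin.mk_lt_mk] at hj1 hj2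
      omega
    -- the root of the pair (x,y) cannot lie strictly between a and b
    have hroot : ¬(a < r (x, y) ∧ r (x, y) < b) := by
      intro hrab
      refine hbetween _ ?_ hrab
      refine Finset.mem_filter.mpr ⟨?_, by constructor <;> [linarith [haI.1, hrab.1]; linarith [hbI.2, hrab.2]]⟩
      exact Finset.mem_insert_of_mem (Finset.mem_insert_of_mem
        (Finset.mem_image_of_mem r (Finset.mem_univ _)))
    -- reduce to the affine function c + s*d
    have habs : (c x y + a * d x y ≤ 0 ∧ c x y + b * d x y ≤ 0) ∨
        (0 ≤ c x y + a * d x y ∧ 0 ≤ c x y + b * d x y) := by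
      rcases le_or_gt (c x y + a * d x y) 0 with hA | hA
      · rcases le_or_gt (c x y + b * d x y) 0 with hB | hB
        · exact Or.inl ⟨hA, hB⟩
        · rcases eq_or_lt_of_le hA with hA' | hA'
          · exact Or.inr ⟨le_of_eq hA'.symm, le_of_lt hB⟩
          · exact absurd (root_between hab hA' hB) hroot
      · rcases le_or_gt (c x y + b * d x y) 0 with hB | hB
        · rcases eq_or_lt_of_le hB with hB' | hB'
          · exact Or.inr ⟨le_of_lt hA, hB'.ge⟩
          · -- c + b*d < 0 < c + a*d : root of -(c) + s*(-d) between a,b, same root value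
            have := root_between hab (c := -(c x y)) (d := -(d x y))
              (by linarith) (by linarith)
            rw [neg_neg] at this
            have hne : -(c x y) / d x y = c x y / -(d x y) := by
              rw [div_neg, neg_div]
            rw [← hne] at this
            exact absurd this hroot
        · exact Or.inr ⟨le_of_lt hA, le_of_lt hB⟩
    have hCD : ∀ s : ℝ, ((1 - s) * h x + s * h' x ≤ (1 - s) * h y + s * h' y) ↔
        c x y + s * d x y ≤ 0 := by
      intro s
      simp only [hc, hd]
      constructor <;> intro hq <;> nlinarith
    rcases habs with ⟨hA, hB⟩ | ⟨hA, hB⟩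
    · left
      intro s hs
      rw [hCD]
      rcases hs with ⟨hs1, hs2⟩
      nlinarith [mul_nonneg (sub_nonneg.mpr hs1) (neg_nonneg.mpr hB),
        mul_nonneg (sub_nonneg.mpr hs2) (neg_nonneg.mpr hA)]
    · right
      intro s hs
      have : c x y + s * d x y ≥ 0 := by
        rcases hs with ⟨hs1, hs2⟩
        nlinarith [mul_nonneg (sub_nonneg.mpr hs1) hB, mul_nonneg (sub_nonneg.mpr hs2) hA]
      simp only [hc, hd] at this ⊢
      nlinarith
end

section
/- Let G be a finite simple graph and let G₀ ≤ G₁ ≤ ... ≤ Gₙ = G be an increasing chain of subgraphs of G whose last term is all of G. Then there exists an acyclic subgraph T of G with the same vertex set as G such that for every i ∈ {0,...,n} and all vertices u, v of Gᵢ, u and v are connected in Gᵢ if and only if u and v are connected in the subgraph whose vertex set is that of Gᵢ and whose edge set is E(T) ∩ E(Gᵢ). That is, there is a spanning forest of G that simultaneously restricts to a spanning forest of every subgraph in the chain. -/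
/-!
Build the forest greedily along the chain: take a spanning forest of `G₀`, extend it to a
spanning forest of `G₁`, and so on. Enlarging a forest `F` to `F'` can only add connections,
so if `F ∩ Gᵢ` already connects everything that `Gᵢ` connects, so does `F' ∩ Gᵢ`.
-/

namespace SimpleGraph

variable {V : Type*}

lemma reachable_inf_eq_of_le {F F' H : SimpleGraph V} (hFF' : F ≤ F')
    (hF : (F ⊓ H).Reachable = H.Reachable) : (F' ⊓ H).Reachable = H.Reachable := by
  ext u v
  refine ⟨fun h ↦ h.mono inf_le_right, fun h ↦ ?_⟩
  rw [← hF] at h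
  exact h.mono (inf_le_inf_right H hFF')

theorem exists_isAcyclic_forall_reachable_inf_eq (H : ℕ → SimpleGraph V) (n : ℕ)
    (hH : ∀ i < n, H i ≤ H (i + 1)) :
    ∃ F ≤ H n, F.IsAcyclic ∧ ∀ i ≤ n, (F ⊓ H i).Reachable = (H i).Reachable := by
  induction n with
  | zero =>
    obtain ⟨F, hFH, hF, hreach⟩ := (H 0).exists_isAcyclic_reachable_eq_le
    refine ⟨F, hFH, hF, fun i hi ↦ ?_⟩
    rwa [Nat.le_zero.mp hi, inf_eq_left.mpr hFH]
  | succ n ih =>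
    obtain ⟨F, hFH, hF, hreach⟩ := ih fun i hi ↦ hH i (by omega)
    obtain ⟨F', hFF', hF'H, hF', hreach'⟩ :=
      exists_isAcyclic_reachable_eq_le_of_le_of_isAcyclic (hFH.trans (hH n n.lt_succ_self)) hF
    refine ⟨F', hF'H, hF', fun i hi ↦ ?_⟩
    rcases Nat.le_succ_iff.mp hi with hi | rfl
    · exact reachable_inf_eq_of_le hFF' (hreach i hi)
    · rwa [inf_eq_left.mpr hF'H]

end SimpleGraph

open SimpleGraph

theorem stmt14_general {V : Type*} (G : SimpleGraph V) (n : ℕ)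
    (c : ℕ → G.Subgraph)
    (hchain : ∀ i < n, c i ≤ c (i + 1)) :
    ∃ T : G.Subgraph, T.verts = Set.univ ∧ T.spanningCoe.IsAcyclic ∧
      ∀ i ≤ n, ∀ u ∈ (c i).verts, ∀ v ∈ (c i).verts,
        ((c i).spanningCoe.Reachable u v ↔ (T ⊓ c i).spanningCoe.Reachable u v) := by
  obtain ⟨F, hFc, hF, hreach⟩ := exists_isAcyclic_forall_reachable_inf_eq
    (fun i ↦ (c i).spanningCoe) n fun i hi ↦ Subgraph.spanningCoe_le_of_le (hchain i hi)
  refine ⟨toSubgraph F (hFc.trans (c n).spanningCoe_le), rfl, hF, fun i hi u _ v _ ↦ ?_⟩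
  exact (congrFun₂ (hreach i hi) u v).symm.to_iff

/-- Let `G` be a finite simple graph and `G₀ ≤ G₁ ≤ ... ≤ Gₙ = G` an
increasing chain of subgraphs whose last term is all of `G`.  Then there is an acyclic
subgraph `T` of `G` with the same vertex set as `G` such that for every `i ≤ n` and all
vertices `u, v` of `Gᵢ`, `u` and `v` are connected in `Gᵢ` iff they are connected in the
subgraph whose vertex set is that of `Gᵢ` and whose edge set is `E(T) ∩ E(Gᵢ)` (i.e. in
`T ⊓ Gᵢ`).  In other words, there is a spanning forest of `G` simultaneously restricting
to a spanning forest of every subgraph in the chain. -/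
theorem stmt14 {V : Type*} [Fintype V] (G : SimpleGraph V) (n : ℕ)
    (c : ℕ → G.Subgraph)
    (hchain : ∀ i < n, c i ≤ c (i + 1))
    (htop : c n = ⊤) :
    ∃ T : G.Subgraph, T.verts = Set.univ ∧ T.spanningCoe.IsAcyclic ∧
      ∀ i ≤ n, ∀ u ∈ (c i).verts, ∀ v ∈ (c i).verts,
        ((c i).spanningCoe.Reachable u v ↔ (T ⊓ c i).spanningCoe.Reachable u v) :=
  stmt14_general G n c hchain
end
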